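/- Let ν* = W₋₁((η₀-1)e^{η₀-1})/(η₀-1) - 1, where W₋₁ is the lower branch of the Lambert W function and 0 < η₀ < 1. Then ν* is the unique positive solution of the equation 1 - e^{-η₀ν} = 1 - e^{-ν} - ν e^{-ν}, i.e. e^{-η₀ν} = (1+ν)e^{-ν}. -/

import Mathlib

/-!
Put `a = η₀ - 1 ∈ (-1, 0)` and `x = a (1 + ν)`. Multiplying the equation by `a eᵃ e^{η₀ν}` turns it
into `x eˣ = a eᵃ`, and `ν > 0` means `x < a`. Since `x ↦ x eˣ` increases on `[-1, ∞)`, such an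
`x` must lie below `-1`, where `x ↦ x eˣ` decreases; so `x` is the unique value `w` of the branch
`W₋₁` there, i.e. `ν = w / a - 1`.
-/

open Real Set

lemma hasDerivAt_mul_exp (x : ℝ) :
    HasDerivAt (fun x : ℝ => x * exp x) ((x + 1) * exp x) x :=
  ((hasDerivAt_id' x).mul (hasDerivAt_exp x)).congr_deriv (by ring)

lemma strictAntiOn_mul_exp : StrictAntiOn (fun x : ℝ => x * exp x) (Iic (-1)) := by
  refine strictAntiOn_of_deriv_neg (convex_Iic _) (by fun_prop) fun x hx => ?_
  rw [interior_Iic, mem_Iio] at hx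
  rw [(hasDerivAt_mul_exp x).deriv]
  exact mul_neg_of_neg_of_pos (by linarith) (exp_pos x)

lemma strictMonoOn_mul_exp : StrictMonoOn (fun x : ℝ => x * exp x) (Ici (-1)) := by
  refine strictMonoOn_of_deriv_pos (convex_Ici _) (by fun_prop) fun x hx => ?_
  rw [interior_Ici, mem_Ioi] at hx
  rw [(hasDerivAt_mul_exp x).deriv]
  exact mul_pos (by linarith) (exp_pos x)

lemma lt_neg_one_of_mul_exp_eq_of_lt {x a : ℝ} (ha : -1 ≤ a) (hxa : x < a)
    (h : x * exp x = a * exp a) : x < -1 := by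
  by_contra! hx
  exact (strictMonoOn_mul_exp hx ha hxa).ne h

lemma exp_neg_mul_eq_iff_mul_exp_eq {η ν : ℝ} (hη : η ≠ 1) :
    exp (-(η * ν)) = (1 + ν) * exp (-ν) ↔
      (η - 1) * (1 + ν) * exp ((η - 1) * (1 + ν)) = (η - 1) * exp (η - 1) := by
  have hfactor : (η - 1) * (1 + ν) * exp ((η - 1) * (1 + ν)) =
      (η - 1) * exp (η - 1) * ((1 + ν) * exp (-ν) / exp (-(η * ν))) := by
    have hexp : exp ((η - 1) * (1 + ν)) = exp (η - 1) * (exp (-ν) / exp (-(η * ν))) := by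
      rw [← exp_sub, ← exp_add]
      ring_nf
    rw [hexp]
    ring
  have hne : (η - 1) * exp (η - 1) ≠ 0 := mul_ne_zero (sub_ne_zero.2 hη) (exp_ne_zero _)
  rw [hfactor, mul_eq_left₀ hne, div_eq_one_iff_eq (exp_ne_zero _), eq_comm]

/-- Let 0 < η₀ < 1 and let w = W₋₁((η₀-1)e^{η₀-1}) be the lower Lambert-W branch value,
characterized by w e^w = (η₀-1)e^{η₀-1} and w < -1. Then ν* = w/(η₀-1) - 1 is the unique
positive solution of e^{-η₀ν} = (1+ν)e^{-ν}. -/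
theorem max_intensity_lambert (η₀ w : ℝ) (hη₀0 : 0 < η₀) (hη₀1 : η₀ < 1)
    (hw : w * Real.exp w = (η₀ - 1) * Real.exp (η₀ - 1)) (hw1 : w < -1) :
    0 < w / (η₀ - 1) - 1 ∧
      Real.exp (-(η₀ * (w / (η₀ - 1) - 1)))
        = (1 + (w / (η₀ - 1) - 1)) * Real.exp (-(w / (η₀ - 1) - 1)) ∧
      ∀ ν : ℝ, 0 < ν → Real.exp (-(η₀ * ν)) = (1 + ν) * Real.exp (-ν) →
        ν = w / (η₀ - 1) - 1 := by
  have ha : η₀ - 1 < 0 := by linarith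
  have hw_eq : (η₀ - 1) * (1 + (w / (η₀ - 1) - 1)) = w := by
    rw [add_sub_cancel, mul_div_cancel₀ _ ha.ne]
  refine ⟨?_, ?_, fun ν hν hsol => ?_⟩
  · rw [sub_pos, one_lt_div_of_neg ha]
    linarith
  · rw [exp_neg_mul_eq_iff_mul_exp_eq hη₀1.ne, hw_eq, hw]
  · rw [exp_neg_mul_eq_iff_mul_exp_eq hη₀1.ne] at hsol
    have hx_lt : (η₀ - 1) * (1 + ν) < η₀ - 1 := by nlinarith
    have hx : (η₀ - 1) * (1 + ν) = w :=
      strictAntiOn_mul_exp.injOn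
        (lt_neg_one_of_mul_exp_eq_of_lt (by linarith) hx_lt hsol).le hw1.le (hsol.trans hw.symm)
    rw [← hx, mul_div_cancel_left₀ _ ha.ne, add_sub_cancel_left]
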